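/- arXiv:2305.03116 — 2 statements merged into one kernel-verified Lean document; each statement's English description precedes it below -/
import Mathlib

section
/- (Calderón transference, weak type) For every map O admitting the approximation properties below, every nontrivial σ-finite system X with d commuting invertible measure-preserving transformations, every family P of integer-valued polynomials, and every Hölder tuple p, the best weak-type constant on X is dominated by that on the canonical system: C_O^P(X, p, w) ≤ C_O^P(X_d, p, w). -/
/-!
Fix `x ∈ X`, a time horizon `K` and a radius `R`. Along the orbit `u ↦ T^u x`, `u ∈ ℤ^d`, the
averages of `f` at times `N ≤ K` and at points `T^u x` with `u` in the cube of radius `R` only see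
the values of `f` on the orbit of the cube of radius `R + S`, where `S` bounds the polynomial
displacements `P_{·,j}(n)`, `n ∈ [1, K]^k`. Truncating the orbit there gives finitely supported
functions on `ℤ^d` to which the weak-type bound of the canonical system applies. Integrating the
resulting count over `x` (each `T^u` preserves `μ`) and applying Hölder's inequality bounds
`(2R+1)^d μ(E)` by `(2(R+S)+1)^d (C ‖f‖ / λ)^{p₀}`, where `E` is the level set of the first `K`
approximants `O_K`. Letting `R → ∞` and then `K → ∞` gives the weak-type bound on `X`.
-/

open MeasureTheory ENNReal NNReal Filter

noncomputable section

variable {X : Type*} [MeasurableSpace X]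

/-- The composite transformation `T₁^{P_{1,j}(n)} ⋯ T_d^{P_{d,j}(n)}`. -/
def compT {d m k : ℕ} (T : Fin d → Equiv.Perm X)
    (P : Fin d → Fin m → MvPolynomial (Fin k) ℤ) (j : Fin m) (n : Fin k → ℤ) :
    Equiv.Perm X :=
  (List.ofFn fun i : Fin d => T i ^ MvPolynomial.eval n (P i j)).prod

/-- The multilinear polynomial average
`A_N^P f(x) = N^{-k} Σ_{n ∈ {1,…,N}^k} Π_j f_j(T₁^{P_{1,j}(n)} ⋯ T_d^{P_{d,j}(n)} x)`. -/
def polyAvg {d m k : ℕ} (T : Fin d → Equiv.Perm X)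
    (P : Fin d → Fin m → MvPolynomial (Fin k) ℤ) (f : Fin m → X → ℝ)
    (N : ℕ) (x : X) : ℝ :=
  (∑ n ∈ Fintype.piFinset fun _ : Fin k => Finset.Icc (1 : ℤ) (N : ℤ),
      ∏ j : Fin m, f j ((compT T P j n) x)) / (N : ℝ) ^ k

/-- The best constant `C_O^P(X, p, s)` in the strong type inequality
`‖O(A_N^P f : N ∈ ℕ)‖_{p₀} ≤ C Π_j ‖f_j‖_{p_j}`. -/
def strongConstO {d m k : ℕ} (μ : Measure X) (T : Fin d → Equiv.Perm X)
    (P : Fin d → Fin m → MvPolynomial (Fin k) ℤ)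
    (O : (ℕ → ℝ) → ℝ≥0∞) (p : Fin (m + 1) → ℝ) : ℝ≥0∞ :=
  sInf {C | ∀ f : Fin m → X → ℝ,
    (∀ j : Fin m, MemLp (f j) (ENNReal.ofReal (p j.succ)) μ) →
    (∫⁻ x, O (fun N => polyAvg T P f (N + 1) x) ^ p 0 ∂μ) ^ (1 / p 0) ≤
      C * ∏ j : Fin m, eLpNorm (f j) (ENNReal.ofReal (p j.succ)) μ}

/-- The best constant `C_O^P(X, p, w)` in the weak type inequality
`‖O(A_N^P f : N ∈ ℕ)‖_{p₀,∞} ≤ C Π_j ‖f_j‖_{p_j}`, where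
`‖g‖_{p₀,∞} = sup_{λ>0} λ μ({x : |g(x)| ≥ λ})^{1/p₀}`. -/
def weakConstO {d m k : ℕ} (μ : Measure X) (T : Fin d → Equiv.Perm X)
    (P : Fin d → Fin m → MvPolynomial (Fin k) ℤ)
    (O : (ℕ → ℝ) → ℝ≥0∞) (p : Fin (m + 1) → ℝ) : ℝ≥0∞ :=
  sInf {C | ∀ f : Fin m → X → ℝ,
    (∀ j : Fin m, MemLp (f j) (ENNReal.ofReal (p j.succ)) μ) →
    ∀ l : ℝ≥0∞, l * μ {x | l ≤ O fun N => polyAvg T P f (N + 1) x} ^ (1 / p 0) ≤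
      C * ∏ j : Fin m, eLpNorm (f j) (ENNReal.ofReal (p j.succ)) μ}

/-- The shifts `T_{d,i}(l) = l + e_i` of the canonical system `X_d = ℤ^d`. -/
def canShift (d : ℕ) (i : Fin d) : Equiv.Perm (Fin d → ℤ) :=
  Equiv.addRight (Pi.single i 1)

open Finset Topology

section Actions

variable {μ : Measure X}

theorem measurePreserving_zpow {σ : Equiv.Perm X} (hσ : MeasurePreserving σ μ μ)
    (hσ_symm : Measurable σ.symm) (n : ℤ) : MeasurePreserving ⇑(σ ^ n) μ μ := by
  have hσ_inv : MeasurePreserving ⇑σ⁻¹ μ μ :=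
    MeasurePreserving.symm ⟨σ, hσ.measurable, hσ_symm⟩ hσ
  induction n using Int.induction_on with
  | zero => exact MeasurePreserving.id μ
  | succ n ih => rw [zpow_add_one, Equiv.Perm.coe_mul]; exact ih.comp hσ
  | pred n ih => rw [zpow_sub_one, Equiv.Perm.coe_mul]; exact ih.comp hσ_inv

def multiZpow {α : Type*} {d : ℕ} (T : Fin d → Equiv.Perm α) (v : Fin d → ℤ) : Equiv.Perm α :=
  (List.ofFn fun i => T i ^ v i).prod

theorem measurePreserving_multiZpow {d : ℕ} {T : Fin d → Equiv.Perm X}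
    (hT : ∀ i, MeasurePreserving (T i) μ μ) (hT_symm : ∀ i, Measurable (T i).symm)
    (v : Fin d → ℤ) : MeasurePreserving (multiZpow T v) μ μ := by
  refine List.prod_induction (fun σ : Equiv.Perm X => MeasurePreserving σ μ μ)
    (fun σ τ hσ hτ => hσ.comp hτ) (MeasurePreserving.id μ) fun σ hσ => ?_
  obtain ⟨i, rfl⟩ := List.mem_ofFn.mp hσ
  exact measurePreserving_zpow (hT i) (hT_symm i) (v i)

theorem multiZpow_add {α : Type*} {d : ℕ} {T : Fin d → Equiv.Perm α}
    (hT : ∀ i i', Commute (T i) (T i')) (v w : Fin d → ℤ) :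
    multiZpow T (v + w) = multiZpow T v * multiZpow T w := by
  induction d with
  | zero => simp [multiZpow]
  | succ d ih =>
    have hcomm : Commute (T 0 ^ w 0) (multiZpow (fun i => T i.succ) fun i => v i.succ) :=
      Commute.list_prod_right _ _ fun σ hσ => by
        obtain ⟨i, rfl⟩ := List.mem_ofFn.mp hσ
        exact (hT 0 i.succ).zpow_zpow _ _
    simp only [multiZpow, List.ofFn_succ, List.prod_cons, Pi.add_apply] at ih hcomm ⊢
    rw [ih (fun i i' => hT _ _) (fun i => v i.succ) (fun i => w i.succ), zpow_add,
      mul_assoc, ← mul_assoc (T 0 ^ w 0), hcomm.eq, mul_assoc, mul_assoc]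

theorem multiZpow_addRight {A : Type*} [AddCommGroup A] {d : ℕ} (a : Fin d → A)
    (v : Fin d → ℤ) :
    multiZpow (fun i => Equiv.addRight (a i)) v = Equiv.addRight (∑ i, v i • a i) := by
  induction d with
  | zero => ext; simp [multiZpow]
  | succ d ih =>
    have h := ih (fun i => a i.succ) (fun i => v i.succ)
    simp only [multiZpow] at h ⊢
    rw [List.ofFn_succ, List.prod_cons, h, Fin.sum_univ_succ]
    ext x
    simp only [Equiv.Perm.coe_mul, Function.comp_apply, Equiv.coe_addRight,
      Equiv.zsmul_addRight]
    abel

theorem multiZpow_canShift (d : ℕ) (v : Fin d → ℤ) :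
    multiZpow (canShift d) v = Equiv.addRight v := by
  change multiZpow (fun i => Equiv.addRight (Pi.single i 1)) v = _
  rw [multiZpow_addRight]
  congr 1
  ext j
  simp [Pi.single_apply]

end Actions

section Cubes

def cube (d R : ℕ) : Finset (Fin d → ℤ) :=
  Fintype.piFinset fun _ => Icc (-(R : ℤ)) R

theorem card_cube (d R : ℕ) : #(cube d R) = (2 * R + 1) ^ d := by
  simp only [cube, Fintype.card_piFinset, Int.card_Icc, prod_const, card_univ, Fintype.card_fin]
  congr 1
  omega

theorem add_mem_cube {d R S : ℕ} {u v : Fin d → ℤ} (hu : u ∈ cube d R) (hv : v ∈ cube d S) :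
    u + v ∈ cube d (R + S) := by
  simp only [cube, Fintype.mem_piFinset, mem_Icc] at hu hv ⊢
  intro i
  have := hu i
  have := hv i
  push_cast
  constructor <;> simp only [Pi.add_apply] <;> omega

theorem le_of_forall_card_cube_mul_le {A Q : ℝ≥0∞} {d S : ℕ}
    (h : ∀ R, (#(cube d R) : ℝ≥0∞) * A ≤ #(cube d (R + S)) * Q) : A ≤ Q := by
  set r : ℕ → ℝ≥0∞ := fun R => ((2 * R + 1 : ℕ) : ℝ≥0∞)
  have hr0 : ∀ R, r R ≠ 0 := fun R => by simp [r]
  have hr : ∀ R, A ≤ (1 + ((2 * S : ℕ) : ℝ≥0∞) / r R) ^ d * Q := fun R => by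
    have hsplit : ((2 * (R + S) + 1 : ℕ) : ℝ≥0∞) = r R * (1 + ((2 * S : ℕ) : ℝ≥0∞) / r R) := by
      rw [mul_one_add, ENNReal.mul_div_cancel (hr0 R) (natCast_ne_top _), ← Nat.cast_add]
      ring_nf
    have hR := h R
    rw [card_cube, card_cube, Nat.cast_pow, Nat.cast_pow, hsplit, mul_pow, mul_assoc] at hR
    exact (ENNReal.mul_le_mul_iff_right (pow_ne_zero d (hr0 R))
      (pow_ne_top (natCast_ne_top _))).1 hR
  have hr_top : Tendsto r atTop (𝓝 ∞) :=
    ENNReal.tendsto_nat_nhds_top.comp (tendsto_atTop_atTop.2 fun b => ⟨b, fun a ha => by omega⟩)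
  have hlim : Tendsto (fun R => (1 + ((2 * S : ℕ) : ℝ≥0∞) / r R) ^ d * Q) atTop (𝓝 Q) := by
    have h1 : Tendsto (fun R => (1 + ((2 * S : ℕ) : ℝ≥0∞) / r R) ^ d) atTop (𝓝 1) := by
      simpa using ENNReal.Tendsto.pow (n := d) ((tendsto_const_nhds (x := 1)).add
        (ENNReal.Tendsto.const_div hr_top (Or.inr (natCast_ne_top (2 * S)))))
    simpa using ENNReal.Tendsto.mul_const h1 (Or.inl one_ne_zero)
  exact ge_of_tendsto' hlim hr

def displacement {d m k : ℕ} (P : Fin d → Fin m → MvPolynomial (Fin k) ℤ) (j : Fin m)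
    (n : Fin k → ℤ) : Fin d → ℤ :=
  fun i => MvPolynomial.eval n (P i j)

theorem compT_eq_multiZpow {α : Type*} {d m k : ℕ} (T : Fin d → Equiv.Perm α)
    (P : Fin d → Fin m → MvPolynomial (Fin k) ℤ) (j : Fin m) (n : Fin k → ℤ) :
    compT T P j n = multiZpow T (displacement P j n) :=
  rfl

def polyRadius {d m k : ℕ} (P : Fin d → Fin m → MvPolynomial (Fin k) ℤ) (K : ℕ) : ℕ :=
  (Fintype.piFinset fun _ : Fin k => Icc (1 : ℤ) K).sup fun n =>
    univ.sup fun ij : Fin d × Fin m => (MvPolynomial.eval n (P ij.1 ij.2)).natAbs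

theorem displacement_mem_cube {d m k : ℕ} (P : Fin d → Fin m → MvPolynomial (Fin k) ℤ)
    {N K : ℕ} (hNK : N ≤ K) (j : Fin m) {n : Fin k → ℤ}
    (hn : n ∈ Fintype.piFinset fun _ : Fin k => Icc (1 : ℤ) N) :
    displacement P j n ∈ cube d (polyRadius P K) := by
  have hnK : n ∈ Fintype.piFinset fun _ : Fin k => Icc (1 : ℤ) K :=
    Fintype.piFinset_subset _ _ (fun _ => Icc_subset_Icc_right (by exact_mod_cast hNK)) hn
  simp only [cube, Fintype.mem_piFinset, mem_Icc]
  intro i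
  have : (displacement P j n i).natAbs ≤ polyRadius P K :=
    le_trans (le_sup (f := fun ij : Fin d × Fin m => (MvPolynomial.eval n (P ij.1 ij.2)).natAbs)
      (mem_univ (i, j))) (le_sup (f := fun n => univ.sup fun ij : Fin d × Fin m =>
        (MvPolynomial.eval n (P ij.1 ij.2)).natAbs) hnK)
  omega

end Cubes

def truncOrbit {α : Type*} {d : ℕ} (T : Fin d → Equiv.Perm α) (g : α → ℝ)
    (s : Finset (Fin d → ℤ)) (x : α) : (Fin d → ℤ) → ℝ :=
  (s : Set (Fin d → ℤ)).indicator fun u => g (multiZpow T u x)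

theorem polyAvg_canShift_truncOrbit {α : Type*} {d m k : ℕ} {T : Fin d → Equiv.Perm α}
    (hT : ∀ i i', Commute (T i) (T i')) (P : Fin d → Fin m → MvPolynomial (Fin k) ℤ)
    (f : Fin m → α → ℝ) (x : α) {R N K : ℕ} (hNK : N ≤ K) {u : Fin d → ℤ}
    (hu : u ∈ cube d R) :
    polyAvg (canShift d) P (fun j => truncOrbit T (f j) (cube d (R + polyRadius P K)) x) N u =
      polyAvg T P f N (multiZpow T u x) := by
  unfold polyAvg
  congr 1
  refine Finset.sum_congr rfl fun n hn => Finset.prod_congr rfl fun j _ => ?_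
  rw [compT_eq_multiZpow, multiZpow_canShift, compT_eq_multiZpow, Equiv.coe_addRight]
  dsimp only [truncOrbit]
  rw [Set.indicator_of_mem (add_mem_cube hu (displacement_mem_cube P hNK j hn)),
    ← Equiv.Perm.mul_apply, ← multiZpow_add hT, add_comm]

section Integration

theorem eLpNorm_count_indicator_finset {α E : Type*} [MeasurableSpace α]
    [MeasurableSingletonClass α] [NormedAddCommGroup E] (s : Finset α) (g : α → E) {q : ℝ}
    (hq : 0 < q) :
    eLpNorm ((s : Set α).indicator g) (ENNReal.ofReal q) Measure.count =
      (∑ a ∈ s, ‖g a‖ₑ ^ q) ^ (1 / q) := by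
  rw [eLpNorm_eq_lintegral_rpow_enorm_toReal (by simpa using hq) ofReal_ne_top,
    lintegral_count, ENNReal.toReal_ofReal hq.le, tsum_eq_sum (s := s)]
  · exact congrArg (· ^ (1 / q)) (sum_congr rfl fun a ha => by
      rw [Set.indicator_of_mem (mem_coe.2 ha)])
  · intro a ha
    rw [Set.indicator_of_notMem (by simpa using ha), enorm_zero, ENNReal.zero_rpow_of_pos hq]

theorem memLp_count_indicator_finset {α E : Type*} [MeasurableSpace α]
    [Countable α] [MeasurableSingletonClass α] [NormedAddCommGroup E] (s : Finset α)
    (g : α → E) {q : ℝ} (hq : 0 < q) :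
    MemLp ((s : Set α).indicator g) (ENNReal.ofReal q) Measure.count := by
  refine ⟨StronglyMeasurable.of_discrete.aestronglyMeasurable, ?_⟩
  rw [eLpNorm_count_indicator_finset s g hq]
  exact rpow_lt_top_of_nonneg (by positivity) (sum_lt_top.2 fun a _ =>
    rpow_lt_top_of_nonneg hq.le enorm_ne_top).ne

variable {μ : Measure X}

theorem lintegral_sum_comp_eq_card_mul {ι : Type*} (s : Finset ι) {φ : ι → X → X}
    (hφ : ∀ i, MeasurePreserving (φ i) μ μ) {g : X → ℝ≥0∞} (hg : Measurable g) :
    ∫⁻ x, ∑ i ∈ s, g (φ i x) ∂μ = #s * ∫⁻ x, g x ∂μ := by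
  rw [lintegral_finsetSum (f := fun i x => g (φ i x)) _ fun i _ => hg.comp (hφ i).measurable]
  simp [(hφ _).lintegral_comp hg]

theorem lintegral_rpow_enorm_eq_eLpNorm_rpow {E : Type*} [NormedAddCommGroup E] (g : X → E)
    {q : ℝ} (hq : 0 < q) :
    ∫⁻ x, ‖g x‖ₑ ^ q ∂μ = eLpNorm g (ENNReal.ofReal q) μ ^ q := by
  rw [eLpNorm_eq_eLpNorm' (by simpa using hq) ofReal_ne_top, ENNReal.toReal_ofReal hq.le,
    lintegral_rpow_enorm_eq_rpow_eLpNorm' hq]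

theorem ENNReal.prod_rpow_eq_rpow_sum {ι : Type*} (s : Finset ι) (a : ℝ≥0∞) {e : ι → ℝ}
    (he : ∀ i ∈ s, 0 ≤ e i) : ∏ i ∈ s, a ^ e i = a ^ ∑ i ∈ s, e i := by
  classical
  induction s using Finset.induction with
  | empty => simp
  | insert i s hi ih =>
    rw [prod_insert hi, sum_insert hi, ih fun j hj => he j (mem_insert_of_mem hj),
      ENNReal.rpow_add_of_nonneg _ _ (he i (mem_insert_self i s))
        (sum_nonneg fun j hj => he j (mem_insert_of_mem hj))]

theorem lintegral_prod_sum_rpow_le {ι κ E : Type*} [Fintype κ] [NormedAddCommGroup E]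
    [MeasurableSpace E] [OpensMeasurableSpace E] (s : Finset ι) {φ : ι → X → X}
    (hφ : ∀ i, MeasurePreserving (φ i) μ μ) {f : κ → X → E} (hf : ∀ j, Measurable (f j))
    {q : κ → ℝ} (hq : ∀ j, 0 < q j) {q₀ : ℝ} (hq₀ : 0 < q₀) (hsum : ∑ j, 1 / q j = 1 / q₀) :
    ∫⁻ x, ∏ j, (∑ i ∈ s, ‖f j (φ i x)‖ₑ ^ q j) ^ (q₀ / q j) ∂μ ≤
      #s * ∏ j, eLpNorm (f j) (ENNReal.ofReal (q j)) μ ^ q₀ := by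
  have he_nonneg : ∀ j ∈ univ, 0 ≤ q₀ / q j := fun j _ => (div_pos hq₀ (hq j)).le
  have he : ∑ j, q₀ / q j = 1 := by
    simp_rw [div_eq_mul_one_div q₀, ← mul_sum, hsum]
    exact mul_one_div_cancel hq₀.ne'
  have hmeas : ∀ j, Measurable fun x => ‖f j x‖ₑ ^ q j := fun j =>
    (hf j).enorm.pow_const _
  calc ∫⁻ x, ∏ j, (∑ i ∈ s, ‖f j (φ i x)‖ₑ ^ q j) ^ (q₀ / q j) ∂μ
      ≤ ∏ j, (∫⁻ x, ∑ i ∈ s, ‖f j (φ i x)‖ₑ ^ q j ∂μ) ^ (q₀ / q j) :=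
        ENNReal.lintegral_prod_norm_pow_le _ (fun j _ => (Finset.measurable_sum _
          fun i _ => (hmeas j).comp (hφ i).measurable).aemeasurable) he he_nonneg
    _ = ∏ j, ((#s : ℝ≥0∞) ^ (q₀ / q j) * eLpNorm (f j) (ENNReal.ofReal (q j)) μ ^ q₀) := by
        refine prod_congr rfl fun j _ => ?_
        rw [lintegral_sum_comp_eq_card_mul s hφ (hmeas j),
          lintegral_rpow_enorm_eq_eLpNorm_rpow _ (hq j),
          mul_rpow_of_nonneg _ _ (he_nonneg j (mem_univ j)), ← ENNReal.rpow_mul,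
          mul_div_cancel₀ _ (hq j).ne']
    _ = #s * ∏ j, eLpNorm (f j) (ENNReal.ofReal (q j)) μ ^ q₀ := by
        rw [prod_mul_distrib, ENNReal.prod_rpow_eq_rpow_sum _ _ he_nonneg, he, ENNReal.rpow_one]

end Integration

theorem mul_rpow_le_iff {l a D : ℝ≥0∞} (hl : l ≠ 0) (hl' : l ≠ ∞) {q : ℝ} (hq : 0 < q) :
    l * a ^ (1 / q) ≤ D ↔ a ≤ (D / l) ^ q := by
  rw [mul_comm, ← ENNReal.le_div_iff_mul_le (Or.inl hl) (Or.inl hl'), one_div,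
    ENNReal.rpow_inv_le_iff hq]

theorem mul_prod_div_rpow {ι : Type*} (s : Finset ι) (C l : ℝ≥0∞) (a : ι → ℝ≥0∞) {q : ℝ}
    (hq : 0 ≤ q) : ((C * ∏ i ∈ s, a i) / l) ^ q = (C / l) ^ q * ∏ i ∈ s, a i ^ q := by
  rw [div_eq_mul_inv, mul_right_comm, ← div_eq_mul_inv, mul_rpow_of_nonneg _ _ hq,
    prod_rpow_of_nonneg hq]

section Transference

def IsWeakTypeBound {d m k : ℕ} (μ : Measure X) (T : Fin d → Equiv.Perm X)
    (P : Fin d → Fin m → MvPolynomial (Fin k) ℤ) (O : (ℕ → ℝ) → ℝ≥0∞) (p : Fin (m + 1) → ℝ)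
    (C : ℝ≥0∞) : Prop :=
  ∀ f : Fin m → X → ℝ, (∀ j, MemLp (f j) (ENNReal.ofReal (p j.succ)) μ) →
    ∀ l : ℝ≥0∞, l * μ {x | l ≤ O fun N => polyAvg T P f (N + 1) x} ^ (1 / p 0) ≤
      C * ∏ j, eLpNorm (f j) (ENNReal.ofReal (p j.succ)) μ

def approxLevelSet {d m k : ℕ} (T : Fin d → Equiv.Perm X)
    (P : Fin d → Fin m → MvPolynomial (Fin k) ℤ) (f : Fin m → X → ℝ)
    (OK : (K : ℕ) → (Fin K → ℝ) → ℝ≥0) (l : ℝ≥0∞) (K : ℕ) : Set X :=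
  {x | l ≤ OK K fun i => polyAvg T P f (i + 1) x}

theorem sum_indicator_orbit_le {α : Type*} {d m k : ℕ} {T : Fin d → Equiv.Perm α}
    {P : Fin d → Fin m → MvPolynomial (Fin k) ℤ} {O : (ℕ → ℝ) → ℝ≥0∞}
    {OK : (K : ℕ) → (Fin K → ℝ) → ℝ≥0} {p : Fin (m + 1) → ℝ} {C : ℝ≥0∞} {f : Fin m → α → ℝ}
    (hTcomm : ∀ i i', Commute (T i) (T i'))
    (hO1 : ∀ (a : ℕ → ℝ) (K : ℕ), ((OK K fun i => a i : ℝ≥0) : ℝ≥0∞) ≤ O a)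
    (hp : ∀ i, 0 < p i) (hC : IsWeakTypeBound Measure.count (canShift d) P O p C)
    {l : ℝ≥0∞} (hl : l ≠ 0) (hl' : l ≠ ∞) (x : α) (R K : ℕ) :
    ∑ u ∈ cube d R, (Set.accumulate (approxLevelSet T P f OK l) K).indicator 1
        (multiZpow T u x) ≤
      (C / l) ^ p 0 * ∏ j, (∑ u ∈ cube d (R + polyRadius P K),
        ‖f j (multiZpow T u x)‖ₑ ^ p j.succ) ^ (p 0 / p j.succ) := by
  set G : Fin m → (Fin d → ℤ) → ℝ := fun j => truncOrbit T (f j) (cube d (R + polyRadius P K)) x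
  set A := {u | l ≤ O fun N => polyAvg (canShift d) P G (N + 1) u}
  have hA : ∀ u ∈ cube d R,
      multiZpow T u x ∈ Set.accumulate (approxLevelSet T P f OK l) K → u ∈ A := by
    intro u hu hx
    obtain ⟨K', hK', hx⟩ := Set.mem_accumulate.1 hx
    have hx : l ≤ OK K' fun i => polyAvg T P f (i + 1) (multiZpow T u x) := hx
    have horbit : (fun i : Fin K' => polyAvg T P f (i + 1) (multiZpow T u x)) =
        fun i : Fin K' => polyAvg (canShift d) P G (i + 1) u := funext fun i =>
      (polyAvg_canShift_truncOrbit hTcomm P f x (by have := i.2; omega) hu).symm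
    exact (horbit ▸ hx).trans (hO1 _ K')
  have hG : ∀ j, eLpNorm (G j) (ENNReal.ofReal (p j.succ)) Measure.count ^ p 0 =
      (∑ u ∈ cube d (R + polyRadius P K), ‖f j (multiZpow T u x)‖ₑ ^ p j.succ) ^
        (p 0 / p j.succ) := fun j => by
    dsimp only [G, truncOrbit]
    rw [eLpNorm_count_indicator_finset _ _ (hp j.succ), ← ENNReal.rpow_mul, one_div_mul_eq_div]
  calc ∑ u ∈ cube d R, (Set.accumulate (approxLevelSet T P f OK l) K).indicator 1
          (multiZpow T u x)
      ≤ ∑ u ∈ cube d R, A.indicator 1 u := Finset.sum_le_sum fun u hu =>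
        Set.indicator_apply_le' (fun hx => (Set.indicator_of_mem (hA u hu hx)
          (1 : (Fin d → ℤ) → ℝ≥0∞)).ge) fun _ => zero_le
    _ ≤ Measure.count A := by
        rw [← lintegral_indicator_one (MeasurableSet.of_discrete), lintegral_count]
        exact ENNReal.sum_le_tsum _
    _ ≤ ((C * ∏ j, eLpNorm (G j) (ENNReal.ofReal (p j.succ)) Measure.count) / l) ^ p 0 :=
        (mul_rpow_le_iff hl hl' (hp 0)).1 (hC G (fun j =>
          memLp_count_indicator_finset _ _ (hp j.succ)) l)
    _ = _ := by rw [mul_prod_div_rpow _ _ _ _ (hp 0).le]; simp_rw [hG]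

variable {μ : Measure X} {d m k : ℕ} {T : Fin d → Equiv.Perm X}
  {P : Fin d → Fin m → MvPolynomial (Fin k) ℤ} {O : (ℕ → ℝ) → ℝ≥0∞}
  {OK : (K : ℕ) → (Fin K → ℝ) → ℝ≥0} {p : Fin (m + 1) → ℝ} {C : ℝ≥0∞} {f : Fin m → X → ℝ}

theorem weakConstO_eq_sInf :
    weakConstO μ T P O p = sInf {C | IsWeakTypeBound μ T P O p C} :=
  rfl

structure IsMeasurePreservingAction (μ : Measure X) (T : Fin d → Equiv.Perm X) : Prop where
  measurePreserving : ∀ i, MeasurePreserving (T i) μ μ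
  measurable_symm : ∀ i, Measurable (T i).symm
  commute : ∀ i i', Commute (T i) (T i')

structure IsApproximatedBy (O : (ℕ → ℝ) → ℝ≥0∞) (OK : (K : ℕ) → (Fin K → ℝ) → ℝ≥0) :
    Prop where
  measurable : ∀ K, Measurable (OK K)
  le : ∀ (a : ℕ → ℝ) (K : ℕ), ((OK K fun i => a i : ℝ≥0) : ℝ≥0∞) ≤ O a
  tendsto : ∀ a : ℕ → ℝ, Tendsto (fun K => ((OK K fun i => a i : ℝ≥0) : ℝ≥0∞)) atTop (𝓝 (O a))

theorem measurable_polyAvg (hTmp : ∀ i, MeasurePreserving (T i) μ μ)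
    (hTsm : ∀ i, Measurable (T i).symm) (hf : ∀ j, Measurable (f j)) (N : ℕ) :
    Measurable fun x => polyAvg T P f N x :=
  (Finset.measurable_sum _ fun _ _ => Finset.measurable_prod _ fun j _ =>
    (hf j).comp (measurePreserving_multiZpow hTmp hTsm _).measurable).div_const _

theorem measurableSet_approxLevelSet (hTmp : ∀ i, MeasurePreserving (T i) μ μ)
    (hTsm : ∀ i, Measurable (T i).symm) (hOKm : ∀ K, Measurable (OK K))
    (hf : ∀ j, Measurable (f j)) (l : ℝ≥0∞) (K : ℕ) :
    MeasurableSet (approxLevelSet T P f OK l K) :=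
  measurableSet_le measurable_const ((hOKm K).coe_nnreal_ennreal.comp
    (measurable_pi_lambda _ fun i => measurable_polyAvg hTmp hTsm hf (i + 1)))

theorem measure_accumulate_approxLevelSet_le (hT : IsMeasurePreservingAction μ T)
    (hOKm : ∀ K, Measurable (OK K))
    (hO1 : ∀ (a : ℕ → ℝ) (K : ℕ), ((OK K fun i => a i : ℝ≥0) : ℝ≥0∞) ≤ O a)
    (hp : ∀ i, 0 < p i) (hHolder : ∑ j : Fin m, 1 / p j.succ = 1 / p 0)
    (hC : IsWeakTypeBound Measure.count (canShift d) P O p C) (hf : ∀ j, Measurable (f j))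
    {l : ℝ≥0∞} (hl : l ≠ 0) (hl' : l ≠ ∞) (K : ℕ) :
    μ (Set.accumulate (approxLevelSet T P f OK l) K) ≤
      ((C * ∏ j, eLpNorm (f j) (ENNReal.ofReal (p j.succ)) μ) / l) ^ p 0 := by
  set B := Set.accumulate (approxLevelSet T P f OK l) K
  have hB : MeasurableSet B := MeasurableSet.iUnion fun K' => MeasurableSet.iUnion fun _ =>
    measurableSet_approxLevelSet hT.measurePreserving hT.measurable_symm hOKm hf l K'
  have hφ := measurePreserving_multiZpow hT.measurePreserving hT.measurable_symm
  refine le_of_forall_card_cube_mul_le (d := d) (S := polyRadius P K) fun R => ?_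
  have hW : Measurable fun x => ∏ j, (∑ u ∈ cube d (R + polyRadius P K),
      ‖f j (multiZpow T u x)‖ₑ ^ p j.succ) ^ (p 0 / p j.succ) :=
    Finset.measurable_prod _ fun j _ => (Finset.measurable_sum _ fun u _ =>
      ((hf j).comp (hφ u).measurable).enorm.pow_const _).pow_const _
  calc (#(cube d R) : ℝ≥0∞) * μ B
      = ∫⁻ x, ∑ u ∈ cube d R, B.indicator 1 (multiZpow T u x) ∂μ := by
        rw [lintegral_sum_comp_eq_card_mul (g := B.indicator 1) _ hφ
          (measurable_one.indicator hB), lintegral_indicator_one hB]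
    _ ≤ ∫⁻ x, (C / l) ^ p 0 * ∏ j, (∑ u ∈ cube d (R + polyRadius P K),
          ‖f j (multiZpow T u x)‖ₑ ^ p j.succ) ^ (p 0 / p j.succ) ∂μ :=
        lintegral_mono fun x => sum_indicator_orbit_le hT.commute hO1 hp hC hl hl' x R K
    _ ≤ (C / l) ^ p 0 * (#(cube d (R + polyRadius P K)) *
          ∏ j, eLpNorm (f j) (ENNReal.ofReal (p j.succ)) μ ^ p 0) := by
        rw [lintegral_const_mul _ hW]
        gcongr
        exact lintegral_prod_sum_rpow_le _ hφ hf (fun j => hp j.succ) (hp 0) hHolder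
    _ = #(cube d (R + polyRadius P K)) *
          ((C * ∏ j, eLpNorm (f j) (ENNReal.ofReal (p j.succ)) μ) / l) ^ p 0 := by
        rw [mul_prod_div_rpow _ _ _ _ (hp 0).le, mul_left_comm]

theorem measure_setOf_lt_le (hT : IsMeasurePreservingAction μ T) (hO : IsApproximatedBy O OK)
    (hp : ∀ i, 0 < p i) (hHolder : ∑ j : Fin m, 1 / p j.succ = 1 / p 0)
    (hC : IsWeakTypeBound Measure.count (canShift d) P O p C) (hf : ∀ j, Measurable (f j))
    {l : ℝ≥0∞} (hl : l ≠ 0) (hl' : l ≠ ∞) :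
    μ {x | l < O fun N => polyAvg T P f (N + 1) x} ≤
      ((C * ∏ j, eLpNorm (f j) (ENNReal.ofReal (p j.succ)) μ) / l) ^ p 0 := by
  have hsub : {x | l < O fun N => polyAvg T P f (N + 1) x} ⊆
      ⋃ K, approxLevelSet T P f OK l K := fun x hx =>
    Set.mem_iUnion.2 (((hO.tendsto _).eventually_const_lt hx).exists.imp fun _ h => h.le)
  calc μ {x | l < O fun N => polyAvg T P f (N + 1) x}
      ≤ μ (⋃ K, approxLevelSet T P f OK l K) := measure_mono hsub
    _ = ⨆ K, μ (Set.accumulate (approxLevelSet T P f OK l) K) :=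
        measure_iUnion_eq_iSup_accumulate
    _ ≤ _ := iSup_le (measure_accumulate_approxLevelSet_le hT hO.measurable hO.le hp hHolder
        hC hf hl hl')

theorem mul_measure_setOf_le_of_measurable (hT : IsMeasurePreservingAction μ T)
    (hO : IsApproximatedBy O OK) (hp : ∀ i, 0 < p i)
    (hHolder : ∑ j : Fin m, 1 / p j.succ = 1 / p 0)
    (hC : IsWeakTypeBound Measure.count (canShift d) P O p C) (hf : ∀ j, Measurable (f j))
    (l : ℝ≥0∞) :
    l * μ {x | l ≤ O fun N => polyAvg T P f (N + 1) x} ^ (1 / p 0) ≤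
      C * ∏ j, eLpNorm (f j) (ENNReal.ofReal (p j.succ)) μ := by
  refine ENNReal.mul_le_of_forall_lt fun l' hl' b hb => ?_
  rcases eq_or_ne l' 0 with rfl | hl'0
  · simp
  calc l' * b ≤ l' * μ {x | l ≤ O fun N => polyAvg T P f (N + 1) x} ^ (1 / p 0) := by
        gcongr
    _ ≤ l' * μ {x | l' < O fun N => polyAvg T P f (N + 1) x} ^ (1 / p 0) := by
        gcongr
        exact (one_div_pos.2 (hp 0)).le
    _ ≤ _ := (mul_rpow_le_iff hl'0 hl'.ne_top (hp 0)).2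
        (measure_setOf_lt_le hT hO hp hHolder hC hf hl'0 hl'.ne_top)

theorem ae_polyAvg_eq (hTmp : ∀ i, MeasurePreserving (T i) μ μ)
    (hTsm : ∀ i, Measurable (T i).symm) {g : Fin m → X → ℝ} (hfg : ∀ j, f j =ᵐ[μ] g j) :
    ∀ᵐ x ∂μ, ∀ N, polyAvg T P f N x = polyAvg T P g N x := by
  have h : ∀ᵐ x ∂μ, ∀ j n, f j (compT T P j n x) = g j (compT T P j n x) :=
    ae_all_iff.2 fun j => ae_all_iff.2 fun n =>
      (measurePreserving_multiZpow hTmp hTsm _).quasiMeasurePreserving.ae_eq_comp (hfg j)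
  filter_upwards [h] with x hx N
  simp only [polyAvg, hx]

theorem IsWeakTypeBound.of_canonical (hT : IsMeasurePreservingAction μ T)
    (hO : IsApproximatedBy O OK) (hp : ∀ i, 0 < p i)
    (hHolder : ∑ j : Fin m, 1 / p j.succ = 1 / p 0)
    (hC : IsWeakTypeBound Measure.count (canShift d) P O p C) :
    IsWeakTypeBound μ T P O p C := by
  intro f hf l
  set g := fun j => (hf j).1.mk (f j)
  have hfg : ∀ j, f j =ᵐ[μ] g j := fun j => (hf j).1.ae_eq_mk
  have hlevel : μ {x | l ≤ O fun N => polyAvg T P f (N + 1) x} =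
      μ {x | l ≤ O fun N => polyAvg T P g (N + 1) x} :=
    measure_congr <| eventuallyEq_set.2 <|
      (ae_polyAvg_eq (P := P) hT.measurePreserving hT.measurable_symm hfg).mono
        fun x hx => by simp [hx]
  rw [hlevel, Finset.prod_congr rfl fun j _ => eLpNorm_congr_ae (hfg j)]
  exact mul_measure_setOf_le_of_measurable hT hO hp hHolder hC
    (fun j => (hf j).1.stronglyMeasurable_mk.measurable) l

end Transference

theorem calderon_transference_weak_general
    {X : Type*} [MeasurableSpace X] (μ : Measure X)
    (d m k : ℕ)
    (T : Fin d → Equiv.Perm X)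
    (hTmp : ∀ i, MeasurePreserving (⇑(T i)) μ μ)
    (hTsm : ∀ i, Measurable (⇑(T i).symm))
    (hTcomm : ∀ i i', Commute (T i) (T i'))
    (P : Fin d → Fin m → MvPolynomial (Fin k) ℤ)
    (O : (ℕ → ℝ) → ℝ≥0∞)
    (OK : (K : ℕ) → (Fin K → ℝ) → ℝ≥0)
    (hOKm : ∀ K, Measurable (OK K))
    (hO1 : ∀ (a : ℕ → ℝ) (K : ℕ), ((OK K fun i => a i : ℝ≥0) : ℝ≥0∞) ≤ O a)
    (hO2 : ∀ a : ℕ → ℝ,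
      Tendsto (fun K => ((OK K fun i => a i : ℝ≥0) : ℝ≥0∞)) atTop (nhds (O a)))
    (p : Fin (m + 1) → ℝ) (hp : ∀ i, 0 < p i)
    (hHolder : ∑ j : Fin m, 1 / p j.succ = 1 / p 0) :
    weakConstO μ T P O p ≤
      weakConstO (Measure.count : Measure (Fin d → ℤ)) (canShift d) P O p := by
  rw [weakConstO_eq_sInf, weakConstO_eq_sInf]
  exact sInf_le_sInf fun _ hC =>
    IsWeakTypeBound.of_canonical ⟨hTmp, hTsm, hTcomm⟩ ⟨hOKm, hO1, hO2⟩ hp hHolder hC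

/-- Calderón transference principle, weak type: for every admissible `O`, every nontrivial
σ-finite system with commuting invertible bimeasurable measure-preserving transformations,
every family of integer polynomials `P`, and every Hölder tuple `p`,
`C_O^P(X, p, w) ≤ C_O^P(X_d, p, w)` where `X_d = ℤ^d` is the canonical system. -/
theorem calderon_transference_weak
    {X : Type*} [MeasurableSpace X] (μ : Measure X) [SigmaFinite μ]
    (hX : ∃ E : Set X, MeasurableSet E ∧ 0 < μ E ∧ μ E < ∞)
    (d m k : ℕ) (hd : 0 < d) (hm : 0 < m) (hk : 0 < k)
    (T : Fin d → Equiv.Perm X)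
    (hTmp : ∀ i, MeasurePreserving (⇑(T i)) μ μ)
    (hTsm : ∀ i, Measurable (⇑(T i).symm))
    (hTcomm : ∀ i i', Commute (T i) (T i'))
    (P : Fin d → Fin m → MvPolynomial (Fin k) ℤ)
    (O : (ℕ → ℝ) → ℝ≥0∞)
    (OK : (K : ℕ) → (Fin K → ℝ) → ℝ≥0)
    (hOKm : ∀ K, Measurable (OK K))
    (hO1 : ∀ (a : ℕ → ℝ) (K : ℕ), ((OK K fun i => a i : ℝ≥0) : ℝ≥0∞) ≤ O a)
    (hO2 : ∀ a : ℕ → ℝ,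
      Tendsto (fun K => ((OK K fun i => a i : ℝ≥0) : ℝ≥0∞)) atTop (nhds (O a)))
    (p : Fin (m + 1) → ℝ) (hp : ∀ i, 0 < p i)
    (hHolder : ∑ j : Fin m, 1 / p j.succ = 1 / p 0) :
    weakConstO μ T P O p ≤
      weakConstO (Measure.count : Measure (Fin d → ℤ)) (canShift d) P O p :=
  calderon_transference_weak_general μ d m k T hTmp hTsm hTcomm P O OK hOKm hO1 hO2 p hp hHolder

end
end

section
/- For every nontrivial σ-finite ergodic system X, the best constant in the weak type (1,1) inequality for the one-sided ergodic maximal operator equals 1: C⁻(X, 1) = 1 = C⁻(X₁, 1). -/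
open MeasureTheory ENNReal Filter

noncomputable section

variable {X : Type*} [MeasurableSpace X]

/-- The one-sided ergodic maximal operator `M⁻f(x) = sup_N |(1/(N+1)) Σ_{n=0}^N f(Tⁿx)|`. -/
def maxOS (T : Equiv.Perm X) (f : X → ℝ) (x : X) : ℝ≥0∞ :=
  ⨆ N : ℕ,
    (‖(∑ n ∈ Finset.range (N + 1), f ((T ^ n) x)) / ((N : ℝ) + 1)‖₊ : ℝ≥0∞)

/-- The centered ergodic maximal operator `M^c f(x) = sup_N |(1/(2N+1)) Σ_{n=-N}^N f(Tⁿx)|`. -/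
def maxC (T : Equiv.Perm X) (f : X → ℝ) (x : X) : ℝ≥0∞ :=
  ⨆ N : ℕ,
    (‖(∑ n ∈ Finset.Icc (-(N : ℤ)) (N : ℤ), f ((T ^ n) x)) / (2 * (N : ℝ) + 1)‖₊ : ℝ≥0∞)

/-- The uncentered ergodic maximal operator
`M^u f(x) = sup_{r,s ≥ 0} |(1/(r+s+1)) Σ_{n=-r}^{s} f(Tⁿx)|`. -/
def maxU (T : Equiv.Perm X) (f : X → ℝ) (x : X) : ℝ≥0∞ :=
  ⨆ r : ℕ, ⨆ s : ℕ,
    (‖(∑ n ∈ Finset.Icc (-(r : ℤ)) (s : ℤ), f ((T ^ n) x)) / ((r : ℝ) + (s : ℝ) + 1)‖₊ : ℝ≥0∞)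

/-- The best constant in the weak type (1,1) inequality for a maximal operator `M`:
the smallest `C` with `λ · μ({x : M f(x) ≥ λ}) ≤ C ‖f‖₁` for all `f ∈ L¹(μ)` and all `λ`. -/
def weakConst (μ : Measure X) (M : (X → ℝ) → X → ℝ≥0∞) : ℝ≥0∞ :=
  sInf {C | ∀ f : X → ℝ, Integrable f μ →
    ∀ l : ℝ≥0∞, l * μ {x | l ≤ M f x} ≤ C * eLpNorm f 1 μ}

/-- The best constant in the strong type (p,p) inequality for a maximal operator `M`:
the smallest `C` with `‖M f‖_p ≤ C ‖f‖_p` for all `f ∈ L^p(μ)`. -/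
def strongConst (μ : Measure X) (M : (X → ℝ) → X → ℝ≥0∞) (p : ℝ) : ℝ≥0∞ :=
  sInf {C | ∀ f : X → ℝ, MemLp f (ENNReal.ofReal p) μ →
    (∫⁻ x, M f x ^ p ∂μ) ^ (1 / p) ≤ C * eLpNorm f (ENNReal.ofReal p) μ}

/-- The best constant in the `L^∞` inequality for a maximal operator `M`. -/
def supConst (μ : Measure X) (M : (X → ℝ) → X → ℝ≥0∞) : ℝ≥0∞ :=
  sInf {C | ∀ f : X → ℝ, MemLp f ∞ μ → essSup (M f) μ ≤ C * eLpNorm f ∞ μ}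

/-- The best constant `C_M(X, p)` for `p ∈ [1,∞]`: the weak type (1,1) constant for `p = 1`,
the `L^∞` constant for `p = ∞`, and the strong type (p,p) constant for `p ∈ (1,∞)`. -/
def bestConst (μ : Measure X) (M : (X → ℝ) → X → ℝ≥0∞) (p : ℝ≥0∞) : ℝ≥0∞ :=
  if p = 1 then weakConst μ M
  else if p = ∞ then supConst μ M
  else strongConst μ M p.toReal

/-- The shift `l ↦ l + 1` on `ℤ`, the transformation of the canonical system `X₁`. -/
def shiftZ : Equiv.Perm ℤ := Equiv.addRight 1

/-- Ergodicity of an invertible transformation: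
`T⁻¹(E) = E` implies `μ(E) = 0` or `μ(X \ E) = 0`. -/
def IsErgodicPerm (μ : Measure X) (T : Equiv.Perm X) : Prop :=
  ∀ E : Set X, MeasurableSet E → (⇑T) ⁻¹' E = E → μ E = 0 ∨ μ Eᶜ = 0

/-- Nontriviality of a measure space: there is a set of strictly positive finite measure. -/
def NontrivialSpace (μ : Measure X) : Prop :=
  ∃ E : Set X, MeasurableSet E ∧ 0 < μ E ∧ μ E < ∞

/-- `X` consists of finitely many atoms: it splits into disjoint measurable sets
`X₀, X₁, …, X_L` with `μ(X₀) = 0`, `T(X_l) ⊆ X_{l+1}` for `1 ≤ l ≤ L-1`, `T(X_L) ⊆ X₁`, and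
no `X_l`, `1 ≤ l ≤ L`, splits into two disjoint measurable sets of nonzero measure. -/
def FinitelyManyAtoms (μ : Measure X) (T : Equiv.Perm X) : Prop :=
  ∃ (L : ℕ) (A : ℕ → Set X), 0 < L ∧
    (∀ l, l ≤ L → MeasurableSet (A l)) ∧
    (∀ l l', l ≤ L → l' ≤ L → l ≠ l' → Disjoint (A l) (A l')) ∧
    (⋃ l ≤ L, A l) = Set.univ ∧
    μ (A 0) = 0 ∧
    (∀ l, 1 ≤ l → l ≤ L - 1 → ⇑T '' A l ⊆ A (l + 1)) ∧
    (⇑T '' A L ⊆ A 1) ∧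
    (∀ l, 1 ≤ l → l ≤ L → ∀ S : Set X, MeasurableSet S → S ⊆ A l →
      μ S = 0 ∨ μ (A l \ S) = 0)

/-- The Rokhlin condition (case (B) of the Kakutani–Rokhlin lemma): for each `L ∈ ℕ` there is
a set `E_L` of strictly positive finite measure with `T^{-l}(E_L)`, `l ∈ [L]`, disjoint. -/
def RokhlinCondition (μ : Measure X) (T : Equiv.Perm X) : Prop :=
  ∀ L : ℕ, 0 < L → ∃ E : Set X, MeasurableSet E ∧ 0 < μ E ∧ μ E < ∞ ∧
    ∀ l l' : ℕ, 1 ≤ l → l ≤ L → 1 ≤ l' → l' ≤ L → l ≠ l' →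
      Disjoint ((⇑(T ^ l)) ⁻¹' E) ((⇑(T ^ l')) ⁻¹' E)

/-! The bound `C⁻ ≤ 1` is Hopf's maximal ergodic inequality for `g = |f|`. In Garsia's proof,
the running maximum `M` of the Birkhoff sums of `h = g - λ` satisfies `M ≤ h + (M ∘ T)⁺`, so on
`{M > 0}` one has `h ≥ M⁺ - M⁺ ∘ T`; integrating, and using that `T` preserves `∫ M⁺`, gives
`∫_{M > 0} h ≥ 0`, i.e. `λ μ{M > 0} ≤ ∫ g`. The bound `C⁻ ≥ 1` is witnessed by the indicator of a
set of positive finite measure, on which the first average `f(x)` already equals `1`. -/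

section MaximalErgodic

variable {α : Type*}

def birkhoffMax (T : α → α) (h : α → ℝ) (N : ℕ) (x : α) : ℝ :=
  (Finset.range (N + 1)).sup' Finset.nonempty_range_add_one fun n => birkhoffSum T h (n + 1) x

lemma birkhoffSum_le_birkhoffMax (T : α → α) (h : α → ℝ) {n N : ℕ} (hn : n ≤ N) (x : α) :
    birkhoffSum T h (n + 1) x ≤ birkhoffMax T h N x :=
  Finset.le_sup' (fun n => birkhoffSum T h (n + 1) x) (Finset.mem_range_succ_iff.mpr hn)

lemma birkhoffMax_pos_iff (T : α → α) (h : α → ℝ) (N : ℕ) (x : α) :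
    0 < birkhoffMax T h N x ↔ ∃ n ≤ N, 0 < birkhoffSum T h (n + 1) x := by
  simp [birkhoffMax, Finset.lt_sup'_iff]

lemma monotone_birkhoffMax (T : α → α) (h : α → ℝ) (x : α) :
    Monotone fun N => birkhoffMax T h N x :=
  fun _ _ hMN => Finset.sup'_mono _ (Finset.range_subset_range.mpr (by omega)) _

lemma birkhoffMax_le_add_max_zero (T : α → α) (h : α → ℝ) (N : ℕ) (x : α) :
    birkhoffMax T h N x ≤ h x + max (birkhoffMax T h N (T x)) 0 := by
  refine Finset.sup'_le _ _ fun n hn => ?_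
  rw [birkhoffSum_succ']
  gcongr
  rcases n with _ | m
  · simp
  · exact le_max_of_le_left
      (birkhoffSum_le_birkhoffMax T h (by simp at hn; omega) (T x))

lemma birkhoffSum_sub_const (T : α → α) (g : α → ℝ) (r : ℝ) (n : ℕ) (x : α) :
    birkhoffSum T (fun y => g y - r) n x = birkhoffSum T g n x - n * r := by
  simp [birkhoffSum, Finset.sum_sub_distrib]

lemma monotone_birkhoffSum_of_nonneg {g : α → ℝ} (hg : 0 ≤ g) (T : α → α) (x : α) :
    Monotone fun n => birkhoffSum T g n x := fun _ _ hmn =>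
  Finset.sum_le_sum_of_subset_of_nonneg (Finset.range_subset_range.mpr hmn) fun _ _ _ => hg _

lemma birkhoffMax_sub_const_le {g : α → ℝ} (hg : 0 ≤ g) (T : α → α) {r : ℝ} (hr : 0 ≤ r)
    (N : ℕ) (x : α) : birkhoffMax T (fun y => g y - r) N x ≤ birkhoffSum T g (N + 1) x - r := by
  refine Finset.sup'_le _ _ fun n hn => ?_
  have hmono := monotone_birkhoffSum_of_nonneg hg T x
    (show n + 1 ≤ N + 1 by simp at hn; omega)
  rw [birkhoffSum_sub_const]
  push_cast
  nlinarith [(n.cast_nonneg : (0 : ℝ) ≤ n)]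

variable [MeasurableSpace α] {μ : Measure α} {T : α → α}

lemma measurable_birkhoffSum {h : α → ℝ} (hT : Measurable T)
    (hh : Measurable h) (n : ℕ) : Measurable (birkhoffSum T h n) :=
  Finset.measurable_sum _ fun k _ => hh.comp (hT.iterate k)

lemma measurable_birkhoffMax {h : α → ℝ} (hT : Measurable T)
    (hh : Measurable h) (N : ℕ) : Measurable (birkhoffMax T h N) :=
  Finset.measurable_range_sup'' fun n _ => measurable_birkhoffSum hT hh (n + 1)

lemma integrable_birkhoffSum (hT : MeasurePreserving T μ μ) {g : α → ℝ} (hg : Integrable g μ)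
    (n : ℕ) : Integrable (birkhoffSum T g n) μ :=
  integrable_finsetSum _ fun k _ => (hT.iterate k).integrable_comp_of_integrable hg

lemma integral_comp_of_measurePreserving (hT : MeasurePreserving T μ μ) {P : α → ℝ}
    (hP : Measurable P) : ∫ x, P (T x) ∂μ = ∫ x, P x ∂μ := by
  rw [← integral_map hT.aemeasurable hP.aestronglyMeasurable, hT.map_eq]

/-- Garsia's form of the maximal ergodic lemma. -/
theorem setIntegral_birkhoffMax_pos_nonneg (hT : MeasurePreserving T μ μ) {h : α → ℝ}
    (hh : Measurable h) (N : ℕ) (hM : Integrable (fun x => max (birkhoffMax T h N x) 0) μ)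
    (hhi : IntegrableOn h {x | 0 < birkhoffMax T h N x} μ) :
    0 ≤ ∫ x in {x | 0 < birkhoffMax T h N x}, h x ∂μ := by
  set E := {x | 0 < birkhoffMax T h N x}
  set P := fun x => max (birkhoffMax T h N x) 0
  have hPm : Measurable P := (measurable_birkhoffMax hT.measurable hh N).max measurable_const
  have hPT : Integrable (fun x => P (T x)) μ := hT.integrable_comp_of_integrable hM
  have hE : MeasurableSet E :=
    measurableSet_lt measurable_const (measurable_birkhoffMax hT.measurable hh N)
  have hP_compl : ∫ x in Eᶜ, P x ∂μ = 0 :=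
    setIntegral_eq_zero_of_forall_eq_zero fun x hx => max_eq_right (not_lt.mp hx)
  calc 0 = ∫ x, P x ∂μ - ∫ x, P (T x) ∂μ := by
        rw [integral_comp_of_measurePreserving hT hPm, sub_self]
    _ ≤ ∫ x in E, P x ∂μ - ∫ x in E, P (T x) ∂μ := by
        rw [← integral_add_compl hE hM, hP_compl, add_zero]
        gcongr ?_ - ?_
        exact setIntegral_le_integral hPT (ae_of_all _ fun x => le_max_right _ _)
    _ = ∫ x in E, (P x - P (T x)) ∂μ := (integral_sub hM.integrableOn hPT.integrableOn).symm
    _ ≤ ∫ x in E, h x ∂μ := by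
        refine setIntegral_mono_on (hM.integrableOn.sub hPT.integrableOn) hhi hE fun x hx => ?_
        have hPx : P x = birkhoffMax T h N x := max_eq_left (le_of_lt hx)
        linarith [birkhoffMax_le_add_max_zero T h N x]

variable {g : α → ℝ}

lemma mul_measure_birkhoffMax_pos_le (hT : MeasurePreserving T μ μ) (hg : Measurable g)
    (hgi : Integrable g μ) (hg0 : 0 ≤ g) {r : ℝ} (hr : 0 < r) (N : ℕ) :
    ENNReal.ofReal r * μ {x | 0 < birkhoffMax T (fun y => g y - r) N x} ≤
      ENNReal.ofReal (∫ x, g x ∂μ) := by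
  set E := {x | 0 < birkhoffMax T (fun y => g y - r) N x}
  have hSi := integrable_birkhoffSum hT hgi (N + 1)
  have hE_fin : μ E < ∞ := by
    refine (measure_mono fun x (hx : 0 < birkhoffMax T _ N x) => ?_).trans_lt
      (hSi.measure_ge_lt_top hr)
    show r ≤ birkhoffSum T g (N + 1) x
    linarith [birkhoffMax_sub_const_le hg0 T hr.le N x]
  have hM : Integrable (fun x => max (birkhoffMax T (fun y => g y - r) N x) 0) μ := by
    refine hSi.mono' ((measurable_birkhoffMax hT.measurable (hg.sub measurable_const) N).max
      measurable_const).aestronglyMeasurable (ae_of_all _ fun x => ?_)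
    rw [Real.norm_of_nonneg (le_max_right _ _)]
    exact max_le (by linarith [birkhoffMax_sub_const_le hg0 T hr.le N x])
      (Finset.sum_nonneg fun _ _ => hg0 _)
  have hnonneg := setIntegral_birkhoffMax_pos_nonneg (h := fun y => g y - r) hT
    (hg.sub measurable_const) N hM (hgi.integrableOn.sub (integrableOn_const hE_fin.ne))
  rw [integral_sub hgi.integrableOn (integrableOn_const hE_fin.ne), setIntegral_const,
    smul_eq_mul] at hnonneg
  have hgE : ∫ x in E, g x ∂μ ≤ ∫ x, g x ∂μ := setIntegral_le_integral hgi (ae_of_all _ hg0)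
  rw [← ENNReal.ofReal_toReal hE_fin.ne, ← ENNReal.ofReal_mul hr.le]
  exact ENNReal.ofReal_le_ofReal (by rw [Measure.real] at hnonneg; linarith)

/-- Hopf's maximal ergodic inequality. -/
theorem mul_measure_exists_birkhoffSum_gt_le (hT : MeasurePreserving T μ μ) (hg : Measurable g)
    (hgi : Integrable g μ) (hg0 : 0 ≤ g) {r : ℝ} (hr : 0 < r) :
    ENNReal.ofReal r * μ {x | ∃ n : ℕ, (n + 1) * r < birkhoffSum T g (n + 1) x} ≤
      ENNReal.ofReal (∫ x, g x ∂μ) := by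
  have hunion : {x | ∃ n : ℕ, (n + 1) * r < birkhoffSum T g (n + 1) x} =
      ⋃ N, {x | 0 < birkhoffMax T (fun y => g y - r) N x} := by
    ext x
    simp only [Set.mem_ofPred_eq, Set.mem_iUnion, birkhoffMax_pos_iff, birkhoffSum_sub_const,
      sub_pos]
    push_cast
    exact ⟨fun ⟨n, hn⟩ => ⟨n, n, le_rfl, hn⟩, fun ⟨_, n, _, hn⟩ => ⟨n, hn⟩⟩
  have hmono : Monotone fun N => {x | 0 < birkhoffMax T (fun y => g y - r) N x} :=
    fun _ _ hMN x hx => lt_of_lt_of_le hx (monotone_birkhoffMax T _ x hMN)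
  rw [hunion, hmono.measure_iUnion, ENNReal.mul_iSup]
  exact iSup_le (mul_measure_birkhoffMax_pos_le hT hg hgi hg0 hr)

end MaximalErgodic

section OneSided

variable {α : Type*}

lemma maxOS_eq_iSup_birkhoffSum (T : Equiv.Perm α) (f : α → ℝ) (x : α) :
    maxOS T f x = ⨆ N : ℕ, (‖birkhoffSum T f (N + 1) x / ((N : ℝ) + 1)‖₊ : ℝ≥0∞) := by
  simp [maxOS, birkhoffSum, Equiv.Perm.coe_pow]

lemma enorm_le_maxOS (T : Equiv.Perm α) (f : α → ℝ) (x : α) : ‖f x‖ₑ ≤ maxOS T f x :=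
  le_iSup_of_le 0 (by simp [enorm])

lemma lt_maxOS_subset (T : Equiv.Perm α) (f : α → ℝ) (r : NNReal) :
    {x | (r : ℝ≥0∞) < maxOS T f x} ⊆
      {x | ∃ n : ℕ, (n + 1) * (r : ℝ) < birkhoffSum T (fun y => |f y|) (n + 1) x} := by
  intro x (hx : (r : ℝ≥0∞) < maxOS T f x)
  rw [maxOS_eq_iSup_birkhoffSum, lt_iSup_iff] at hx
  obtain ⟨N, hN⟩ := hx
  rw [ENNReal.coe_lt_coe, ← NNReal.coe_lt_coe, coe_nnnorm, Real.norm_eq_abs, abs_div,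
    abs_of_pos (by positivity : (0 : ℝ) < N + 1), lt_div_iff₀ (by positivity)] at hN
  exact ⟨N, mul_comm (r : ℝ) _ ▸ hN.trans_le (Finset.abs_sum_le_sum_abs _ _)⟩

variable {μ : Measure X} {T : Equiv.Perm X}

lemma maxOS_ae_eq (hT : Measure.QuasiMeasurePreserving T μ μ) {f f' : X → ℝ}
    (hf : f =ᵐ[μ] f') : maxOS T f =ᵐ[μ] maxOS T f' := by
  filter_upwards [ae_all_iff.mpr fun N => hT.birkhoffSum_ae_eq_of_ae_eq hf (N + 1)] with x hx
  simp only [maxOS_eq_iSup_birkhoffSum, hx]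

lemma mul_measure_lt_maxOS_le_of_measurable (hT : MeasurePreserving T μ μ) {f : X → ℝ}
    (hfm : Measurable f) (hf : Integrable f μ) (r : ℝ≥0∞) :
    r * μ {x | r < maxOS T f x} ≤ eLpNorm f 1 μ := by
  induction r using ENNReal.recTopCoe with
  | top => simp
  | coe r =>
    rcases eq_or_ne r 0 with rfl | hr
    · simp
    calc (r : ℝ≥0∞) * μ {x | r < maxOS T f x}
        ≤ ENNReal.ofReal r *
            μ {x | ∃ n : ℕ, (n + 1) * (r : ℝ) < birkhoffSum T (fun y => |f y|) (n + 1) x} := by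
          rw [ENNReal.ofReal_coe_nnreal]
          exact mul_le_mul_right (measure_mono (lt_maxOS_subset T f r)) _
      _ ≤ ENNReal.ofReal (∫ x, |f x| ∂μ) :=
          mul_measure_exists_birkhoffSum_gt_le hT hfm.abs hf.abs (fun x => abs_nonneg (f x))
            (by positivity)
      _ = eLpNorm f 1 μ := by
          simp_rw [eLpNorm_one_eq_lintegral_enorm, ← ofReal_integral_norm_eq_lintegral_enorm hf,
            Real.norm_eq_abs]

lemma mul_measure_lt_maxOS_le (hT : MeasurePreserving T μ μ) {f : X → ℝ}
    (hf : Integrable f μ) (r : ℝ≥0∞) : r * μ {x | r < maxOS T f x} ≤ eLpNorm f 1 μ := by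
  have hf' := hf.aemeasurable.ae_eq_mk
  have hM := maxOS_ae_eq hT.quasiMeasurePreserving hf'
  have hset : {x | r < maxOS T f x} =ᵐ[μ] {x | r < maxOS T (hf.aemeasurable.mk f) x} :=
    hM.mono fun x hx => congrArg (r < ·) hx
  rw [measure_congr hset, eLpNorm_congr_ae hf']
  exact mul_measure_lt_maxOS_le_of_measurable hT hf.aemeasurable.measurable_mk
    (hf.congr hf') r

theorem mul_measure_le_maxOS_le (hT : MeasurePreserving T μ μ) {f : X → ℝ}
    (hf : Integrable f μ) (l : ℝ≥0∞) : l * μ {x | l ≤ maxOS T f x} ≤ eLpNorm f 1 μ :=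
  ENNReal.mul_le_of_forall_lt fun r hr b hb =>
    calc r * b ≤ r * μ {x | r < maxOS T f x} := by
          gcongr
          exact hb.le.trans (measure_mono fun x (hx : l ≤ _) => hr.trans_le hx)
      _ ≤ eLpNorm f 1 μ := mul_measure_lt_maxOS_le hT hf r

lemma one_le_weakConst (hX : NontrivialSpace μ) {M : (X → ℝ) → X → ℝ≥0∞}
    (hM : ∀ f x, ‖f x‖ₑ ≤ M f x) : 1 ≤ weakConst μ M := by
  obtain ⟨E, hEm, hE0, hEfin⟩ := hX
  refine le_sInf fun C hC => ?_
  have hC1 := hC (E.indicator fun _ => (1 : ℝ))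
    ((integrableOn_const hEfin.ne).integrable_indicator hEm) 1
  rw [one_mul, eLpNorm_indicator_const hEm one_ne_zero one_ne_top] at hC1
  have hE : E ⊆ {x | 1 ≤ M (E.indicator fun _ => (1 : ℝ)) x} := fun x hx =>
    le_of_eq_of_le (by simp [hx]) (hM _ x)
  refine (ENNReal.mul_le_mul_iff_left hE0.ne' hEfin.ne).mp ?_
  simpa using (measure_mono hE).trans hC1

theorem weakConst_maxOS_eq_one (hX : NontrivialSpace μ) (hT : MeasurePreserving T μ μ) :
    weakConst μ (maxOS T) = 1 :=
  le_antisymm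
    (sInf_le fun f hf l => (one_mul (eLpNorm f 1 μ)).symm ▸ mul_measure_le_maxOS_le hT hf l)
    (one_le_weakConst hX (enorm_le_maxOS T))

end OneSided

theorem oneSided_weak_const_ergodic_general {X : Type*} [MeasurableSpace X] (μ : Measure X)
    (hX : NontrivialSpace μ) (T : Equiv.Perm X)
    (hT : MeasurePreserving (⇑T) μ μ) :
    weakConst μ (maxOS T) = 1 ∧
    weakConst (Measure.count : Measure ℤ) (maxOS shiftZ) = 1 :=
  ⟨weakConst_maxOS_eq_one hX hT,
    weakConst_maxOS_eq_one ⟨{0}, measurableSet_singleton 0, by simp, by simp⟩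
      (measurePreserving_add_right _ 1)⟩

/-- For every nontrivial σ-finite ergodic system, the best constant in the weak type (1,1)
inequality for the one-sided ergodic maximal operator equals `1 = C⁻(X₁, 1)`. -/
theorem oneSided_weak_const_ergodic {X : Type*} [MeasurableSpace X] (μ : Measure X)
    [SigmaFinite μ] (hX : NontrivialSpace μ) (T : Equiv.Perm X)
    (hT : MeasurePreserving (⇑T) μ μ) (hTs : Measurable (⇑T.symm))
    (hE : IsErgodicPerm μ T) :
    weakConst μ (maxOS T) = 1 ∧
    weakConst (Measure.count : Measure ℤ) (maxOS shiftZ) = 1 :=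
  oneSided_weak_const_ergodic_general μ hX T hT
end
end
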